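/- Let G be a finite simple graph with vertex set [n] = {1,...,n} that contains no 3-cycles (G is triangle-free), with edges ordered lexicographically. Then every tight spanning forest of G is an NBC set; in particular, for every m ≥ 0 the set of m-edge tight spanning forests of G is contained in the set of m-edge NBC sets of G. -/

import Mathlib

open Classical

/-- A list of elements of a linear order is *tight* if it contains no three-term
subsequence order-isomorphic to 231, 312 or 321. -/
def TightList {α : Type*} [LinearOrder α] (l : List α) : Prop :=
  ∀ a b c : α, [a, b, c].Sublist l →
    ¬(c < a ∧ a < b) ∧ ¬(b < c ∧ c < a) ∧ ¬(c < b ∧ b < a)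

/-- A simple graph on a linearly ordered vertex type is a *tight forest*. -/
def IsTightForest {V : Type*} [LinearOrder V] (F : SimpleGraph V) : Prop :=
  F.IsAcyclic ∧ ∀ (r v : V), (∀ w, F.Reachable r w → r ≤ w) →
    ∀ p : F.Walk r v, p.IsPath → TightList p.support

/-- `F` is a tight spanning forest of `G`. -/
def IsTSF {n : ℕ} (G : SimpleGraph (Fin n)) (F : Finset (Sym2 (Fin n))) : Prop :=
  (F : Set (Sym2 (Fin n))) ⊆ G.edgeSet ∧
    IsTightForest (SimpleGraph.fromEdgeSet (F : Set (Sym2 (Fin n))))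

/-- Lexicographic order on edges, writing each edge with its smaller endpoint first. -/
def edgeLE {n : ℕ} (e f : Sym2 (Fin n)) : Prop :=
  Sym2.inf e < Sym2.inf f ∨ (Sym2.inf e = Sym2.inf f ∧ Sym2.sup e ≤ Sym2.sup f)

/-- `B` is a broken circuit of `G`. -/
def IsBrokenCircuit {n : ℕ} (G : SimpleGraph (Fin n)) (B : Finset (Sym2 (Fin n))) : Prop :=
  ∃ (v : Fin n) (c : G.Walk v v) (e : Sym2 (Fin n)), c.IsCycle ∧ e ∈ c.edges ∧
    (∀ f ∈ c.edges, edgeLE e f) ∧ B = c.edges.toFinset.erase e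

/-- `N` is an NBC set of `G`: a set of edges of `G` containing no broken circuit. -/
def IsNBC {n : ℕ} (G : SimpleGraph (Fin n)) (N : Finset (Sym2 (Fin n))) : Prop :=
  (N : Set (Sym2 (Fin n))) ⊆ G.edgeSet ∧
    ∀ B : Finset (Sym2 (Fin n)), IsBrokenCircuit G B → ¬ B ⊆ N

/-! Suppose the edges of a cycle `C` other than its least edge `ab` (`a < b`) all lie in the tight
forest `F`. They form a path `a, w, x, …, b` in `F` all of whose vertices are at least `a`, and
minimality of `ab` forces `b < w`; as `G` has no triangle, `x ≠ b`. Let `z` be the first vertex of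
this path met by the path from the root `r` of its component. If `z ∈ {a, w}`, the root path to `b`
contains the subsequence `w, x, b`; otherwise the root path to `a` contains `z, w, a` with `a < z`.
Either way a three-term subsequence ends below its first entry, which is exactly what the patterns
231, 312 and 321 have in common. -/

open SimpleGraph Walk

theorem Sym2.inf_le_of_mem {α : Type*} [SemilatticeInf α] {e : Sym2 α} {y : α} (hy : y ∈ e) :
    e.inf ≤ y := by
  induction e with
  | _ a b => rcases Sym2.mem_iff.1 hy with rfl | rfl <;> simp

section TightLists

variable {α : Type*} [LinearOrder α]

theorem TightList.lt_of_sublist {l : List α} (hl : TightList l) (hnd : l.Nodup) {a b c : α}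
    (h : [a, b, c].Sublist l) : a < c := by
  obtain ⟨h231, h312, h321⟩ := hl a b c h
  have hdistinct := h.nodup hnd
  simp only [List.nodup_cons, List.mem_cons, List.not_mem_nil, or_false,
    not_or, List.nodup_nil, not_false_eq_true, and_true] at hdistinct
  grind

end TightLists

namespace SimpleGraph

variable {V : Type*} {G : SimpleGraph V}

theorem exists_reachable_forall_reachable_le [LinearOrder V] [WellFoundedLT V] (v : V) :
    ∃ r, G.Reachable r v ∧ ∀ y, G.Reachable r y → r ≤ y := by
  obtain ⟨r, hr, hmin⟩ := wellFounded_lt.has_min {y | G.Reachable v y} ⟨v, Reachable.refl v⟩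
  exact ⟨r, hr.symm, fun y hy => not_lt.1 (hmin y (hr.trans hy))⟩

theorem Reachable.exists_isPath_first_mem {s : Set V} {r a : V} (h : G.Reachable r a)
    (ha : a ∈ s) : ∃ z ∈ s, ∃ q : G.Walk r z, q.IsPath ∧ ∀ y ∈ q.support, y ∈ s → y = z := by
  obtain ⟨q₀⟩ := h
  suffices ∃ z ∈ s, ∃ q : G.Walk r z, ∀ y ∈ q.support, y ∈ s → y = z by
    obtain ⟨z, hz, q, hq⟩ := this
    exact ⟨z, hz, q.bypass, q.bypass_isPath, fun y hy => hq y (q.support_bypass_subset_support hy)⟩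
  induction q₀ with
  | nil => exact ⟨_, ha, nil, by simp⟩
  | @cons r _ _ hadj _ ih =>
    by_cases hr : r ∈ s
    · exact ⟨r, hr, nil, by simp⟩
    · obtain ⟨z, hz, q, hq⟩ := ih ha
      refine ⟨z, hz, cons hadj q, ?_⟩
      intro y hy hys
      rcases List.mem_cons.1 hy with rfl | hy
      · exact absurd hys hr
      · exact hq y hy hys

namespace Walk

variable {u v w : V}

theorem IsPath.append {p : G.Walk u v} {q : G.Walk v w} (hp : p.IsPath) (hq : q.IsPath)
    (h : ∀ x ∈ p.support, x ∈ q.support → x = v) : (p.append q).IsPath := by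
  rw [isPath_def, support_append]
  have := hq.support_nodup
  rw [← cons_tail_support] at this
  grind [isPath_def, List.nodup_append, List.mem_of_mem_tail]

theorem start_le_of_mem_support [LinearOrder V] {p : G.Walk u v} (h : ∀ e ∈ p.edges, ∀ y ∈ e, u ≤ y) :
    ∀ y ∈ p.support, u ≤ y := by
  intro y hy
  rw [← List.mem_reverse, ← support_reverse, mem_support_iff_exists_mem_edges] at hy
  rcases hy with rfl | ⟨e, he, hy⟩
  · exact le_rfl
  · exact h e (by simpa using he) y hy

theorem IsCycle.exists_isPath_of_mem_edges {c : G.Walk v v} (hc : c.IsCycle) {a b : V}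
    (he : s(a, b) ∈ c.edges) :
    ∃ p : G.Walk a b, p.IsPath ∧ s(a, b) ∉ p.edges ∧ p.edges ⊆ c.edges := by
  classical
  have ha : a ∈ c.support := c.fst_mem_support_of_mem_edges he
  have hrot := (c.rotate_edges a ha).perm
  set c' := c.rotate a ha
  have hc' : c'.IsCycle := hc.rotate ha
  have hb : b ∈ c'.support := c'.snd_mem_support_of_mem_edges (hrot.mem_iff.2 he)
  have hdrop : (c'.dropUntil b hb).IsPath := by
    refine IsCycle.isPath_of_append_right ?_ (by rwa [take_spec])
    simpa using (c.adj_of_mem_edges he).ne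
  by_cases hin : s(a, b) ∈ (c'.takeUntil b hb).edges
  · refine ⟨(c'.dropUntil b hb).reverse, hdrop.reverse, ?_, ?_⟩
    · rw [edges_reverse, List.mem_reverse]
      exact hc'.isTrail.disjoint_edges_takeUntil_dropUntil hb hin
    · rw [edges_reverse, List.reverse_subset]
      exact List.Subset.trans (c'.edges_dropUntil_subset_edges hb) hrot.subset
  · exact ⟨_, hc'.isPath_takeUntil hb, hin,
    List.Subset.trans (c'.edges_takeUntil_subset_edges hb) hrot.subset⟩

end Walk

end SimpleGraph

section TightForests

variable {V : Type*} [LinearOrder V] [WellFoundedLT V] {H : SimpleGraph V}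

theorem IsTightForest.lt_of_isPath (hH : IsTightForest H) {a w x b : V} {h₁ : H.Adj a w}
    {h₂ : H.Adj w x} {p : H.Walk x b} (hP : (cons h₁ (cons h₂ p)).IsPath)
    (hmin : ∀ y ∈ (cons h₁ (cons h₂ p)).support, a ≤ y) (hxb : x ≠ b) : w < b := by
  set P := cons h₁ (cons h₂ p)
  obtain ⟨r, hra, hroot⟩ := exists_reachable_forall_reachable_le (G := H) a
  obtain ⟨z, hzP, q, hq, hqP⟩ :=
    hra.exists_isPath_first_mem (s := {y | y ∈ P.support}) P.start_mem_support
  have tight : ∀ {c} (X : H.Walk z c), X.IsPath → X.support ⊆ P.support →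
      ∀ {d e f}, [d, e, f].Sublist X.support → d < f := by
    intro c X hX hXP d e f hsub
    have hR : (q.append X).IsPath := hq.append hX fun y hyq hyX => hqP y hyq (hXP hyX)
    exact (hH.2 r c hroot _ hR).lt_of_sublist hR.support_nodup
      (hsub.trans (support_suffix_support_append q X).sublist)
  have hwxb : [w, x, b].Sublist (cons h₂ p).support := by
    rw [support_cons, ← cons_tail_support]
    exact ((List.singleton_sublist.2 (p.end_mem_tail_support_of_ne hxb)).cons_cons x).cons_cons w
  simp only [P, support_cons, List.mem_cons] at hzP
  rcases hzP with rfl | rfl | hz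
  · exact tight P hP (List.Subset.refl _) (hwxb.cons _)
  · exact tight (cons h₂ p) hP.of_cons (by simp [P]) hwxb
  · set S := cons h₁ (cons h₂ (p.takeUntil z hz))
    have hSP : S.support.Sublist P.support := by
      simpa [S, P] using (p.support_takeUntil_prefix_support hz).sublist
    have hzwa : [a, w, z].Sublist S.support :=
      ((List.singleton_sublist.2 (end_mem_support _)).cons_cons w).cons_cons a
    have hza := tight S.reverse ((isPath_def _).2 (hSP.nodup hP.support_nodup)).reverse
      (by simpa using hSP.subset) (by simpa using hzwa.reverse)
    exact absurd (hmin z (hSP.subset (hzwa.subset (by simp)))) (not_le.2 hza)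

end TightForests

section BrokenCircuits

variable {n : ℕ} {G : SimpleGraph (Fin n)}

theorem edgeLE.inf_le {e f : Sym2 (Fin n)} (h : edgeLE e f) : e.inf ≤ f.inf :=
  h.elim le_of_lt fun h => h.1.le

theorem IsBrokenCircuit.exists_isPath_of_subset {B F : Finset (Sym2 (Fin n))}
    (hB : IsBrokenCircuit G B) (hBF : B ⊆ F) :
    ∃ a b, a < b ∧ G.Adj a b ∧ ∃ p : (fromEdgeSet (F : Set (Sym2 (Fin n)))).Walk a b,
      p.IsPath ∧ s(a, b) ∉ p.edges ∧ ∀ f ∈ p.edges, edgeLE s(a, b) f := by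
  obtain ⟨v, c, e, hc, hec, hlex, rfl⟩ := hB
  obtain ⟨a, b, hab, rfl⟩ : ∃ a b, a < b ∧ e = s(a, b) := by
    induction e with
    | _ x y =>
      rcases lt_or_gt_of_ne (c.adj_of_mem_edges hec).ne with h | h
      · exact ⟨x, y, h, rfl⟩
      · exact ⟨y, x, h, Sym2.eq_swap⟩
  obtain ⟨p, hp, hep, hpc⟩ := hc.exists_isPath_of_mem_edges hec
  have hpF : ∀ f ∈ p.edges, f ∈ (fromEdgeSet (F : Set (Sym2 (Fin n)))).edgeSet := by
    intro f hf
    rw [edgeSet_fromEdgeSet]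
    refine ⟨hBF (Finset.mem_erase.2 ⟨?_, List.mem_toFinset.2 (hpc hf)⟩), ?_⟩
    · exact ne_of_mem_of_not_mem hf hep
    · exact G.not_isDiag_of_mem_edgeSet (p.edges_subset_edgeSet hf)
  refine ⟨a, b, hab, c.adj_of_mem_edges hec, p.transfer _ hpF, hp.transfer hpF,
    by rwa [edges_transfer], fun f hf => hlex f (hpc ?_)⟩
  rwa [edges_transfer] at hf

theorem IsTSF.isNBC (htf : ∀ i j k : Fin n, G.Adj i j → G.Adj j k → G.Adj i k → False)
    {F : Finset (Sym2 (Fin n))} (hF : IsTSF G F) : IsNBC G F := by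
  refine ⟨hF.1, fun B hB hBF => ?_⟩
  obtain ⟨a, b, hab, hGab, p, hp, hep, hlex⟩ := hB.exists_isPath_of_subset hBF
  have hHG {x y : Fin n} (h : (fromEdgeSet (F : Set (Sym2 (Fin n)))).Adj x y) : G.Adj x y :=
    hF.1 ((fromEdgeSet_adj _).1 h).1
  have hmin := p.start_le_of_mem_support fun f hf y hy => by
    simpa [hab.le] using (hlex f hf).inf_le.trans (Sym2.inf_le_of_mem hy)
  cases p with
  | nil => exact hab.ne rfl
  | @cons _ w _ h₁ p =>
    cases p with
    | nil => exact hep (by simp)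
    | @cons _ x _ h₂ p =>
      have hxb : x ≠ b := by
        rintro rfl
        exact htf a w x (hHG h₁) (hHG h₂) hGab
      have hwb : w < b := hF.2.lt_of_isPath hp hmin hxb
      have haw : a < w := lt_of_le_of_ne (hmin w (by simp)) h₁.ne
      have hbw : b ≤ w := by
        simpa [edgeLE, hab.le, haw.le] using hlex s(a, w) (by simp)
      exact absurd hwb (not_lt.2 hbw)

end BrokenCircuits

theorem stmt_14 {n : ℕ} (G : SimpleGraph (Fin n))
    (htf : ∀ i j k : Fin n, G.Adj i j → G.Adj j k → G.Adj i k → False) :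
    (∀ F : Finset (Sym2 (Fin n)), IsTSF G F → IsNBC G F) ∧
    ∀ m : ℕ,
      {F : Finset (Sym2 (Fin n)) | IsTSF G F ∧ F.card = m} ⊆
        {F : Finset (Sym2 (Fin n)) | IsNBC G F ∧ F.card = m} := by
  have hNBC : ∀ F : Finset (Sym2 (Fin n)), IsTSF G F → IsNBC G F := fun F hF => hF.isNBC htf
  exact ⟨hNBC, fun m F hF => ⟨hNBC F hF.1, hF.2⟩⟩
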